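/- If w : ℝ^d → ℝ is Borel measurable, satisfies |w(x)| ≤ C_w(1+|x|^{m̃}) for all x (for some constants C_w and m̃ ≥ 0), satisfies w(x) = ∫ w(y) μ_t^x(dy) for all t ≥ 0 and x ∈ ℝ^d, and satisfies ∫ w dμ = 0, then w(x) = 0 for every x ∈ ℝ^d. Consequently, the solution of the integral Poisson equation u(x) = ∫ u dμ_t^x + ∫_0^t (∫ f dμ_s^x) ds is unique in the class of Borel functions of polynomial growth with zero μ-mean. -/

import Mathlib

/-!
Fix `x` and a radius `R ≥ 1`, and split `w` into its truncation `g = 𝟙_{‖y‖ ≤ R} w` and the tail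
`w - g`. Since `w(x) = ∫ w dμ_t^x - ∫ w dμ`, `|w(x)|` is at most the two tail integrals plus
`|∫ g dμ_t^x - ∫ g dμ|`. On the tail `|w| ≤ (2 C_w / R) ‖y‖^(m̃+1)`, so by the
moment bounds (P1), (P2) the tail integrals are `O(1/R)` uniformly in `t`, while the bounded
function `g` gives `|∫ g dμ_t^x - ∫ g dμ| ≤ sup |g| · ‖μ_t^x - μ‖ → 0` as `t → ∞` by (P3).
Letting first `t → ∞` and then `R → ∞` gives `w(x) = 0`.
-/

open MeasureTheory Set

/-- Total variation norm of the difference of two (finite) measures. -/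
noncomputable def tvNorm {α : Type*} [MeasurableSpace α] (μ ν : Measure α) : ℝ :=
  (⨆ (E : Set α) (_ : MeasurableSet E), (μ E - ν E)).toReal +
  (⨆ (E : Set α) (_ : MeasurableSet E), (ν E - μ E)).toReal

open Filter Topology Metric

section TotalVariation

variable {X : Type*} [MeasurableSpace X]

lemma tvNorm_nonneg (α β : Measure X) : 0 ≤ tvNorm α β :=
  add_nonneg ENNReal.toReal_nonneg ENNReal.toReal_nonneg

lemma toReal_measure_sub_le_toReal_iSup (α β : Measure X) [IsFiniteMeasure α] {E : Set X}
    (hE : MeasurableSet E) :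
    (α E - β E).toReal ≤ (⨆ (E : Set X) (_ : MeasurableSet E), (α E - β E)).toReal :=
  ENNReal.toReal_mono
    (ne_top_of_le_ne_top (measure_ne_top α univ)
      (iSup₂_le fun F _ => tsub_le_self.trans (measure_mono (subset_univ F))))
    (le_iSup₂_of_le E hE le_rfl)

lemma abs_integral_sub_integral_le_mul_tvNorm {α β : Measure X} [IsFiniteMeasure α]
    [IsFiniteMeasure β] {g : X → ℝ} (hg : StronglyMeasurable g) {M : ℝ} (hM : 0 ≤ M)
    (hgM : ∀ y, |g y| ≤ M) :
    |∫ y, g y ∂α - ∫ y, g y ∂β| ≤ M * tvNorm α β := by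
  obtain ⟨s, hs, hαβ, hβα⟩ := exists_isHahnDecomposition α β
  set ρ₁ := β.restrict s - α.restrict s
  set ρ₂ := α.restrict sᶜ - β.restrict sᶜ
  -- the Jordan decomposition `α - β = ρ₂ - ρ₁`, read off the Hahn set `s`
  have hsplit : α + ρ₁ = β + ρ₂ := calc
    α + ρ₁ = α.restrict s + α.restrict sᶜ + ρ₁ := by rw [α.restrict_add_restrict_compl hs]
    _ = α.restrict sᶜ + (ρ₁ + α.restrict s) := by abel
    _ = ρ₂ + β.restrict sᶜ + β.restrict s := by
      rw [Measure.sub_add_cancel_of_le hαβ, Measure.sub_add_cancel_of_le hβα, add_comm]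
    _ = β.restrict s + β.restrict sᶜ + ρ₂ := by abel
    _ = β + ρ₂ := by rw [β.restrict_add_restrict_compl hs]
  have hint (ν : Measure X) [IsFiniteMeasure ν] : Integrable g ν :=
    .of_bound hg.aestronglyMeasurable M (ae_of_all _ hgM)
  have hbound (ν : Measure X) [IsFiniteMeasure ν] : |∫ y, g y ∂ν| ≤ M * ν.real univ :=
    norm_integral_le_of_norm_le_const (μ := ν) (f := g) (ae_of_all ν hgM)
  have hdiff : ∫ y, g y ∂α - ∫ y, g y ∂β = ∫ y, g y ∂ρ₂ - ∫ y, g y ∂ρ₁ := by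
    have := congrArg (fun ν => ∫ y, g y ∂ν) hsplit
    simp only [integral_add_measure (hint _) (hint _)] at this
    linarith
  have hρ₁ : ρ₁.real univ ≤ (⨆ (E : Set X) (_ : MeasurableSet E), (β E - α E)).toReal := by
    rw [measureReal_def, Measure.sub_apply MeasurableSet.univ hαβ, Measure.restrict_apply_univ,
      Measure.restrict_apply_univ]
    exact toReal_measure_sub_le_toReal_iSup β α hs
  have hρ₂ : ρ₂.real univ ≤ (⨆ (E : Set X) (_ : MeasurableSet E), (α E - β E)).toReal := by
    rw [measureReal_def, Measure.sub_apply MeasurableSet.univ hβα, Measure.restrict_apply_univ,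
      Measure.restrict_apply_univ]
    exact toReal_measure_sub_le_toReal_iSup α β hs.compl
  rw [hdiff, tvNorm]
  calc |∫ y, g y ∂ρ₂ - ∫ y, g y ∂ρ₁| ≤ M * ρ₂.real univ + M * ρ₁.real univ :=
        (abs_sub _ _).trans (add_le_add (hbound ρ₂) (hbound ρ₁))
    _ ≤ _ := by rw [mul_add]; gcongr

end TotalVariation

lemma integrable_and_integral_le_of_lintegral_ofReal_le {α : Type*} [MeasurableSpace α]
    {γ : Measure α} {f : α → ℝ} (hf : Measurable f) (hf0 : ∀ y, 0 ≤ f y)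
    {A : ENNReal} (hA : A ≠ ⊤) (h : ∫⁻ y, ENNReal.ofReal (f y) ∂γ ≤ A) :
    Integrable f γ ∧ ∫ y, f y ∂γ ≤ A.toReal := by
  have hf0' : 0 ≤ᵐ[γ] f := ae_of_all _ hf0
  refine ⟨⟨hf.aestronglyMeasurable, (hasFiniteIntegral_iff_ofReal hf0').2 (h.trans_lt hA.lt_top)⟩,
    ?_⟩
  rw [integral_eq_lintegral_of_nonneg_ae hf0' hf.aestronglyMeasurable]
  exact ENNReal.toReal_mono hA h

lemma one_add_rpow_le_div_mul_rpow_add_one {m R r : ℝ} (hm : 0 ≤ m) (hR : 1 ≤ R)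
    (hr : R < r) : 1 + r ^ m ≤ 2 / R * r ^ (m + 1) := by
  have h1 : 1 ≤ r ^ m := Real.one_le_rpow (hR.trans hr.le) hm
  calc 1 + r ^ m ≤ 2 * r ^ m := by linarith
    _ ≤ 2 * r ^ m * (r / R) :=
      le_mul_of_one_le_right (by linarith) ((one_le_div (by linarith)).2 hr.le)
    _ = 2 / R * r ^ (m + 1) := by
      rw [Real.rpow_add_one (by linarith)]
      field_simp

lemma nonpos_of_forall_le_div_add_mul {a K : ℝ} {B τ : ℝ → ℝ}
    (hτ : Tendsto τ atTop (𝓝 0)) (h : ∀ R ≥ 1, ∀ t ≥ 0, a ≤ K / R + B R * τ t) : a ≤ 0 := by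
  have hR : ∀ R ≥ 1, a ≤ K / R := fun R hR =>
    ge_of_tendsto (by simpa using (hτ.const_mul (B R)).const_add (K / R))
      ((eventually_ge_atTop 0).mono (h R hR))
  exact ge_of_tendsto (tendsto_const_nhds.div_atTop tendsto_id) ((eventually_ge_atTop 1).mono hR)

lemma tendsto_zero_of_le_mul_one_add_rpow_neg {f : ℝ → ℝ} {c k : ℝ} (hk : 0 < k)
    (hf0 : ∀ t, 0 ≤ f t) (hf : ∀ t ≥ 0, f t ≤ c * (1 + t) ^ (-k)) :
    Tendsto f atTop (𝓝 0) := by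
  have hdecay : Tendsto (fun t : ℝ => c * (1 + t) ^ (-k)) atTop (𝓝 0) := by
    simpa using ((tendsto_rpow_neg_atTop hk).comp
      (tendsto_atTop_add_const_left _ 1 tendsto_id)).const_mul c
  exact tendsto_of_tendsto_of_tendsto_of_le_of_le' tendsto_const_nhds hdecay
    (Eventually.of_forall hf0) ((eventually_ge_atTop 0).mono hf)

section PolynomialGrowth

variable {E : Type*} [NormedAddCommGroup E] {w : E → ℝ} {C m R : ℝ}

lemma nonneg_of_abs_le_mul_one_add_rpow (hwb : ∀ y, |w y| ≤ C * (1 + ‖y‖ ^ m)) : 0 ≤ C :=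
  nonneg_of_mul_nonneg_left ((abs_nonneg _).trans (hwb 0))
    (by linarith [Real.rpow_nonneg (norm_nonneg (0 : E)) m])

lemma abs_indicator_closedBall_le (hm : 0 ≤ m) (hwb : ∀ y, |w y| ≤ C * (1 + ‖y‖ ^ m))
    (hR : 0 ≤ R) (y : E) : |(closedBall 0 R).indicator w y| ≤ C * (1 + R ^ m) := by
  have hC := nonneg_of_abs_le_mul_one_add_rpow hwb
  by_cases hy : y ∈ closedBall 0 R
  · rw [indicator_of_mem hy]
    refine (hwb y).trans ?_
    gcongr
    exact mem_closedBall_zero_iff.1 hy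
  · rw [indicator_of_notMem hy, abs_zero]
    positivity

lemma abs_sub_indicator_closedBall_le (hm : 0 ≤ m) (hwb : ∀ y, |w y| ≤ C * (1 + ‖y‖ ^ m))
    (hR : 1 ≤ R) (y : E) :
    |w y - (closedBall 0 R).indicator w y| ≤ 2 * C / R * ‖y‖ ^ (m + 1) := by
  have hC := nonneg_of_abs_le_mul_one_add_rpow hwb
  by_cases hy : y ∈ closedBall 0 R
  · rw [indicator_of_mem hy, sub_self, abs_zero]
    have : 0 < R := by linarith
    positivity
  · rw [indicator_of_notMem hy, sub_zero, show 2 * C / R * ‖y‖ ^ (m + 1) =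
      C * (2 / R * ‖y‖ ^ (m + 1)) by ring]
    refine (hwb y).trans (mul_le_mul_of_nonneg_left ?_ hC)
    exact one_add_rpow_le_div_mul_rpow_add_one hm hR (by simpa using hy)

variable [MeasurableSpace E]

lemma integrable_of_abs_le_mul_one_add_rpow {γ : Measure E} [IsFiniteMeasure γ]
    (hw : Measurable w) (hm : 0 ≤ m) (hwb : ∀ y, |w y| ≤ C * (1 + ‖y‖ ^ m))
    (hγ : Integrable (fun y => ‖y‖ ^ (m + 1)) γ) : Integrable w γ := by
  refine ((hγ.const_mul (2 * C)).add (integrable_const (C * 2))).mono'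
    hw.aestronglyMeasurable (ae_of_all _ fun y => ?_)
  have htail := abs_sub_indicator_closedBall_le hm hwb le_rfl y
  have hball := abs_indicator_closedBall_le hm hwb zero_le_one y
  simp only [div_one, Real.one_rpow] at htail hball
  show |w y| ≤ 2 * C * ‖y‖ ^ (m + 1) + C * 2
  linarith [abs_sub_abs_le_abs_sub (w y) ((closedBall 0 1).indicator w y)]

lemma abs_integral_sub_integral_le_of_abs_le_mul_one_add_rpow [OpensMeasurableSpace E]
    {γ ν : Measure E} [IsFiniteMeasure γ] [IsFiniteMeasure ν] (hw : Measurable w) (hm : 0 ≤ m)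
    (hwb : ∀ y, |w y| ≤ C * (1 + ‖y‖ ^ m)) (hγ : Integrable (fun y => ‖y‖ ^ (m + 1)) γ)
    (hν : Integrable (fun y => ‖y‖ ^ (m + 1)) ν) (hR : 1 ≤ R) :
    |∫ y, w y ∂γ - ∫ y, w y ∂ν| ≤
      2 * C / R * (∫ y, ‖y‖ ^ (m + 1) ∂γ + ∫ y, ‖y‖ ^ (m + 1) ∂ν) +
        C * (1 + R ^ m) * tvNorm γ ν := by
  set g := (closedBall (0 : E) R).indicator w
  have hg : Measurable g := hw.indicator measurableSet_closedBall
  have hgb := abs_indicator_closedBall_le hm hwb (zero_le_one.trans hR)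
  have htail (η : Measure E) [IsFiniteMeasure η] (hη : Integrable (fun y => ‖y‖ ^ (m + 1)) η) :
      |∫ y, w y ∂η - ∫ y, g y ∂η| ≤ 2 * C / R * ∫ y, ‖y‖ ^ (m + 1) ∂η := by
    rw [← integral_sub (integrable_of_abs_le_mul_one_add_rpow hw hm hwb hη)
      (.of_bound hg.aestronglyMeasurable _ (ae_of_all _ hgb)), ← integral_const_mul]
    exact norm_integral_le_of_norm_le (f := fun y => w y - g y) (hη.const_mul _)
      (ae_of_all _ (abs_sub_indicator_closedBall_le hm hwb hR))
  have hmid := abs_integral_sub_integral_le_mul_tvNorm (α := γ) (β := ν) hg.stronglyMeasurable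
    (by positivity [nonneg_of_abs_le_mul_one_add_rpow hwb]) hgb
  have hγt := htail γ hγ
  have hνt := htail ν hν
  rw [abs_sub_comm] at hνt
  linarith [abs_sub_le (∫ y, w y ∂γ) (∫ y, g y ∂γ) (∫ y, w y ∂ν),
    abs_sub_le (∫ y, g y ∂γ) (∫ y, g y ∂ν) (∫ y, w y ∂ν)]

end PolynomialGrowth

theorem stmt5_general
    (d : ℕ)
    (P : ℝ → EuclideanSpace ℝ (Fin d) → Measure (EuclideanSpace ℝ (Fin d)))
    (μ : Measure (EuclideanSpace ℝ (Fin d)))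
    (hP : ∀ t x, 0 ≤ t → IsProbabilityMeasure (P t x))
    (hμ : IsProbabilityMeasure μ)
    (hP1 : ∀ m m' : ℝ, 0 < m → m + 2 < m' → ∃ C : ℝ, ∀ t x, 0 ≤ t →
      ∫⁻ y, ENNReal.ofReal (‖y‖ ^ m) ∂(P t x) ≤ ENNReal.ofReal (C * (1 + ‖x‖ ^ m')))
    (hP2 : ∀ m : ℝ, 0 < m → ∫⁻ y, ENNReal.ofReal (‖y‖ ^ m) ∂μ < ⊤)
    (hP3 : ∀ k m : ℝ, 0 < k → 2 * k + 2 < m → ∃ C : ℝ, ∀ t x, 0 ≤ t →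
      tvNorm (P t x) μ ≤ C * (1 + ‖x‖ ^ m) * (1 + t) ^ (-(k + 1)))
    (w : EuclideanSpace ℝ (Fin d) → ℝ) (hw : Measurable w)
    (Cw mt : ℝ) (hmt : 0 ≤ mt)
    (hwb : ∀ x, |w x| ≤ Cw * (1 + ‖x‖ ^ mt))
    (hwharm : ∀ t : ℝ, 0 ≤ t → ∀ x, w x = ∫ y, w y ∂(P t x))
    (hwμ : ∫ x, w x ∂μ = 0) :
    ∀ x, w x = 0 := by
  intro x
  have hmom_meas : Measurable fun y : EuclideanSpace ℝ (Fin d) => ‖y‖ ^ (mt + 1) :=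
    measurable_norm.pow_const _
  obtain ⟨C₁, hC₁⟩ := hP1 (mt + 1) (mt + 4) (by linarith) (by linarith)
  obtain ⟨C₃, hC₃⟩ := hP3 1 5 one_pos (by norm_num)
  set A := ENNReal.ofReal (C₁ * (1 + ‖x‖ ^ (mt + 4)))
  set B := ∫⁻ y, ENNReal.ofReal (‖y‖ ^ (mt + 1)) ∂μ
  have hmomP (t : ℝ) (ht : 0 ≤ t) := integrable_and_integral_le_of_lintegral_ofReal_le
    hmom_meas (fun y => by positivity) ENNReal.ofReal_ne_top (hC₁ t x ht)
  obtain ⟨hμint, hμmom⟩ := integrable_and_integral_le_of_lintegral_ofReal_le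
    hmom_meas (fun y => by positivity) (hP2 _ (by linarith)).ne le_rfl
  have hCw := nonneg_of_abs_le_mul_one_add_rpow hwb
  have hest : ∀ R ≥ 1, ∀ t ≥ 0,
      |w x| ≤ 2 * Cw * (A.toReal + B.toReal) / R + Cw * (1 + R ^ mt) * tvNorm (P t x) μ := by
    intro R hR t ht
    have := hP t x ht
    obtain ⟨hPint, hPmom⟩ := hmomP t ht
    rw [hwharm t ht x, ← sub_zero (∫ y, w y ∂P t x), ← hwμ, mul_div_right_comm]
    refine (abs_integral_sub_integral_le_of_abs_le_mul_one_add_rpow hw hmt hwb hPint hμint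
      hR).trans ?_
    gcongr
  exact abs_nonpos_iff.1 <| nonpos_of_forall_le_div_add_mul
    (tendsto_zero_of_le_mul_one_add_rpow_neg (by norm_num) (fun t => tvNorm_nonneg _ _)
      fun t ht => hC₃ t x ht) hest

/-- if `w` is Borel measurable with polynomial growth
`|w(x)| ≤ C_w(1+|x|^m̃)`, harmonic in the sense `w(x) = ∫ w dμ_t^x` for all `t ≥ 0`
and `x`, and centered `∫ w dμ = 0`, then `w ≡ 0` (uniqueness of the solution of the
integral Poisson equation in the class of centered Borel functions of polynomial growth). -/
theorem stmt5
    (d : ℕ) (hd : 1 ≤ d)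
    (P : ℝ → EuclideanSpace ℝ (Fin d) → Measure (EuclideanSpace ℝ (Fin d)))
    (μ : Measure (EuclideanSpace ℝ (Fin d)))
    (hP : ∀ t x, 0 ≤ t → IsProbabilityMeasure (P t x))
    (hμ : IsProbabilityMeasure μ)
    (hmeas : ∀ E : Set (EuclideanSpace ℝ (Fin d)), MeasurableSet E →
      Measurable (fun p : ℝ × EuclideanSpace ℝ (Fin d) => P p.1 p.2 E))
    (hP1 : ∀ m m' : ℝ, 0 < m → m + 2 < m' → ∃ C : ℝ, ∀ t x, 0 ≤ t →
      ∫⁻ y, ENNReal.ofReal (‖y‖ ^ m) ∂(P t x) ≤ ENNReal.ofReal (C * (1 + ‖x‖ ^ m')))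
    (hP2 : ∀ m : ℝ, 0 < m → ∫⁻ y, ENNReal.ofReal (‖y‖ ^ m) ∂μ < ⊤)
    (hP3 : ∀ k m : ℝ, 0 < k → 2 * k + 2 < m → ∃ C : ℝ, ∀ t x, 0 ≤ t →
      tvNorm (P t x) μ ≤ C * (1 + ‖x‖ ^ m) * (1 + t) ^ (-(k + 1)))
    (w : EuclideanSpace ℝ (Fin d) → ℝ) (hw : Measurable w)
    (Cw mt : ℝ) (hmt : 0 ≤ mt)
    (hwb : ∀ x, |w x| ≤ Cw * (1 + ‖x‖ ^ mt))
    (hwharm : ∀ t : ℝ, 0 ≤ t → ∀ x, w x = ∫ y, w y ∂(P t x))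
    (hwμ : ∫ x, w x ∂μ = 0) :
    ∀ x, w x = 0 :=
  stmt5_general d P μ hP hμ hP1 hP2 hP3 w hw Cw mt hmt hwb hwharm hwμ
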